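/- arXiv:2604.24891 — 2 statements merged into one kernel-verified Lean document; each statement's English description precedes it below -/
import Mathlib

section
/- For every positive integer i, if a_1 ≤ R and a_j ≤ a_1 + ... + a_{j-1} + R for all 1 < j ≤ i, where a_1 < ... < a_i are positive integers, then FS({a_1, ..., a_i}) intersects every interval of R consecutive integers contained in [0, a_1 + ... + a_i + R - 1]. -/
/-- Finite version of the syndeticity lemma: `FS({a_1,…,a_i})` meets every
interval of `R` consecutive integers contained in `[0, a_1+⋯+a_i+R-1]`. -/
theorem stmt1 (R i : ℕ) (hR : 0 < R) (hi : 0 < i) (a : ℕ → ℕ)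
    (hpos : ∀ j, j < i → 0 < a j)
    (hmono : ∀ j k, j < k → k < i → a j < a k)
    (h1 : a 0 ≤ R)
    (hrec : ∀ j, 0 < j → j < i → a j ≤ (∑ l ∈ Finset.range j, a l) + R) :
    ∀ n : ℕ, n ≤ ∑ j ∈ Finset.range i, a j →
      ∃ s ⊆ Finset.range i, n ≤ ∑ j ∈ s, a j ∧ ∑ j ∈ s, a j < n + R := by
  induction i with
  | zero => omega
  | succ i ih =>
    intro n hn
    rw [Finset.sum_range_succ] at hn
    by_cases hi0 : i = 0
    · subst hi0
      rcases Nat.eq_zero_or_pos n with h | h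
      · exact ⟨∅, by simp, by simp; omega⟩
      · refine ⟨{0}, by simp, ?_, ?_⟩ <;> simp at hn ⊢ <;> omega
    · have hi' : 0 < i := Nat.pos_of_ne_zero hi0
      set S := ∑ l ∈ Finset.range i, a l with hS
      have hai : a i ≤ S + R := hrec i hi' (Nat.lt_succ_self i)
      have ihs : ∀ m, m ≤ S → ∃ s ⊆ Finset.range i,
          m ≤ ∑ j ∈ s, a j ∧ ∑ j ∈ s, a j < m + R := by
        exact ih hi' (fun j hj => hpos j (by omega))
          (fun j k hjk hk => hmono j k hjk (by omega))
          (fun j hj hji => hrec j hj (by omega))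
      by_cases hnS : n ≤ S
      · obtain ⟨s, hs, h1', h2'⟩ := ihs n hnS
        exact ⟨s, hs.trans (Finset.range_subset_range.mpr (Nat.le_succ i)), h1', h2'⟩
      · by_cases hna : n < a i
        · refine ⟨{i}, ?_, ?_, ?_⟩
          · simp
          · simpa using hna.le
          · simp only [Finset.sum_singleton]; omega
        · obtain ⟨s, hs, h1', h2'⟩ := ihs (n - a i) (by omega)
          have hionotin : i ∉ s := fun h => by
            exact absurd (hs h) (by simp)
          refine ⟨insert i s, ?_, ?_, ?_⟩
          · intro x hx
            simp at hx ⊢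
            rcases hx with h | h
            · omega
            · have := hs h; simp at this; omega
          · rw [Finset.sum_insert hionotin]; omega
          · rw [Finset.sum_insert hionotin]; omega
end

section
/- Let d be a positive integer and p, Z > 0 real with p < 1. Then the set R_d(p,Z) := {(x_1,...,x_d) ∈ Z_{≥0}^d : (x_1 + log p^{-1})···(x_d + log p^{-1}) ≤ Z} is contained in the union over (e_1,...,e_d) ∈ E of the sets {(y_1,...,y_d) ∈ Z_{≥0}^d : y_1/2^{e_1} + ... + y_d/2^{e_d} ≤ 1}, where E := {(e_1,...,e_d) ∈ Z^d : e_i ≥ log_2 log p^{-1} for all i, and e_1 + ... + e_d ≤ d + d log_2 d + log_2 Z}. -/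
/-!
Take `e i = ⌈log₂ (d (x i + log p⁻¹))⌉`. Then `2 ^ e i ≥ d x i`, so every summand `x i / 2 ^ e i` is at
most `1 / d`; each `e i` exceeds `log₂ (x i + log p⁻¹) + log₂ d` by less than `1`, so summing and using
`log₂ ∏ (x i + log p⁻¹) ≤ log₂ Z` gives the bound on `∑ e i`.
-/

open Real Finset

lemma le_zpow_ceil_logb {b y : ℝ} (hb : 1 < b) (hy : 0 < y) : y ≤ b ^ ⌈logb b y⌉ := by
  rw [← rpow_intCast]
  exact (logb_le_iff_le_rpow hb hy).mp (Int.le_ceil _)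

lemma sum_ceil_logb_mul_le {ι : Type*} [Fintype ι] {b c : ℝ} (hc : 0 < c) {y : ι → ℝ}
    (hy : ∀ i, 0 < y i) :
    ∑ i, (⌈logb b (c * y i)⌉ : ℝ) ≤ Fintype.card ι * (1 + logb b c) + logb b (∏ i, y i) := by
  rw [logb_prod _ _ fun i _ => (hy i).ne']
  calc ∑ i, (⌈logb b (c * y i)⌉ : ℝ) ≤ ∑ i, (1 + logb b c + logb b (y i)) := by
        refine sum_le_sum fun i _ => ?_
        rw [add_assoc, ← logb_mul hc.ne' (hy i).ne']
        linarith [Int.ceil_lt_add_one (logb b (c * y i))]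
    _ = Fintype.card ι * (1 + logb b c) + ∑ i, logb b (y i) := by
        simp only [sum_add_distrib, sum_const, card_univ, nsmul_eq_mul]
        ring

lemma sum_div_le_one_of_card_mul_le {ι : Type*} [Fintype ι] {x w : ι → ℝ} (hw : ∀ i, 0 < w i)
    (hxw : ∀ i, Fintype.card ι * x i ≤ w i) : ∑ i, x i / w i ≤ 1 := by
  calc ∑ i, x i / w i ≤ ∑ _i : ι, 1 / (Fintype.card ι : ℝ) := by
        refine sum_le_sum fun i _ => ?_
        have : (0 : ℝ) < Fintype.card ι := Nat.cast_pos.mpr (Fintype.card_pos_iff.mpr ⟨i⟩)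
        rw [div_le_div_iff₀ (hw i) this]
        linarith [hxw i]
    _ ≤ 1 := by
        rw [sum_const, card_univ, nsmul_eq_mul, mul_one_div]
        exact div_self_le_one _

theorem stmt5_general (d : ℕ) (hd : 0 < d) (p Z : ℝ) (hp : 0 < p) (hp1 : p < 1)
    (x : Fin d → ℕ)
    (hx : ∏ i, ((x i : ℝ) + Real.log p⁻¹) ≤ Z) :
    ∃ e : Fin d → ℤ,
      (∀ i, Real.logb 2 (Real.log p⁻¹) ≤ (e i : ℝ)) ∧
      (∑ i, (e i : ℝ)) ≤ d + d * Real.logb 2 d + Real.logb 2 Z ∧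
      ∑ i, (x i : ℝ) / (2 : ℝ) ^ (e i) ≤ 1 := by
  set L := log p⁻¹
  have hL : 0 < L := log_pos ((one_lt_inv₀ hp).mpr hp1)
  have hd1 : (1 : ℝ) ≤ d := Nat.one_le_cast.mpr hd
  have hy : ∀ i, 0 < (x i : ℝ) + L := fun i => by positivity
  have hdy : ∀ i, 0 < d * ((x i : ℝ) + L) := fun i => by nlinarith [hy i]
  refine ⟨fun i => ⌈logb 2 (d * ((x i : ℝ) + L))⌉, fun i => ?_, ?_, ?_⟩
  · have hLdy : L ≤ d * ((x i : ℝ) + L) := by nlinarith [(x i).cast_nonneg (α := ℝ)]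
    exact (logb_le_logb_of_le one_lt_two hL hLdy).trans (Int.le_ceil _)
  · have hlogZ := logb_le_logb_of_le one_lt_two (prod_pos fun i _ => hy i) hx
    have := sum_ceil_logb_mul_le (b := 2) (by positivity : (0 : ℝ) < d) hy
    simp only [Fintype.card_fin] at this
    linarith
  · refine sum_div_le_one_of_card_mul_le (fun i => zpow_pos two_pos _) fun i => ?_
    rw [Fintype.card_fin]
    exact (by nlinarith : (d : ℝ) * x i ≤ d * ((x i : ℝ) + L)).trans
      (le_zpow_ceil_logb one_lt_two (hdy i))

/-- Covering the shifted hyperboloid region by regions under hyperplanes: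
every point of `R_d(p,Z)` lies below one of the hyperplanes indexed by `E`. -/
theorem stmt5 (d : ℕ) (hd : 0 < d) (p Z : ℝ) (hp : 0 < p) (hp1 : p < 1) (hZ : 0 < Z)
    (x : Fin d → ℕ)
    (hx : ∏ i, ((x i : ℝ) + Real.log p⁻¹) ≤ Z) :
    ∃ e : Fin d → ℤ,
      (∀ i, Real.logb 2 (Real.log p⁻¹) ≤ (e i : ℝ)) ∧
      (∑ i, (e i : ℝ)) ≤ d + d * Real.logb 2 d + Real.logb 2 Z ∧
      ∑ i, (x i : ℝ) / (2 : ℝ) ^ (e i) ≤ 1 :=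
  stmt5_general d hd p Z hp hp1 x hx
end
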